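/- Let A ∈ M_n(ℂ) be a diagonal matrix and E ∈ M_n(ℂ), and let ‖·‖ be a matrix norm induced by an absolute norm on ℂ^n. If λ̂ is an eigenvalue of A + E, then there exists a diagonal entry λ of A such that |λ̂ - λ| ≤ ‖E‖. -/

import Mathlib

/-!
An absolute norm `ν` is monotone: `|xᵢ| ≤ |yᵢ|` for all `i` forces `ν x ≤ ν y`, because
shrinking one coordinate of `z` is a convex combination of `z` and its reflection in that
coordinate, which has the same norm. If `(diag d + E) v = λ̂ v` with `v ≠ 0`, then `E v` has
coordinates `(λ̂ - dᵢ) vᵢ`, so by monotonicity `ν (E v) ≥ minᵢ |λ̂ - dᵢ| · ν v`, while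
`ν (E v) ≤ ‖E‖ ν v` for the induced norm; dividing by `ν v > 0` gives the bound.
-/

open Matrix

structure IsAbsoluteNorm {𝕜 ι : Type*} [RCLike 𝕜] (ν : (ι → 𝕜) → ℝ) : Prop where
  pos : ∀ x, x ≠ 0 → 0 < ν x
  add_le : ∀ x y, ν (x + y) ≤ ν x + ν y
  smul : ∀ (c : 𝕜) x, ν (c • x) = ‖c‖ * ν x
  eq_of_norm_eq : ∀ x y, (∀ i, ‖x i‖ = ‖y i‖) → ν x = ν y

noncomputable def inducedMatrixNorm {𝕜 ι : Type*} [RCLike 𝕜] (ν : (ι → 𝕜) → ℝ) [Fintype ι]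
    (M : Matrix ι ι 𝕜) : ℝ :=
  sSup {r : ℝ | ∃ x, ν x = 1 ∧ r = ν (M *ᵥ x)}

namespace IsAbsoluteNorm

variable {𝕜 ι : Type*} [RCLike 𝕜] {ν : (ι → 𝕜) → ℝ} (hν : IsAbsoluteNorm ν)
include hν

theorem map_zero : ν 0 = 0 := by
  simpa using hν.smul 0 0

theorem nonneg (x : ι → 𝕜) : 0 ≤ ν x := by
  have h := hν.add_le x (-x)
  rw [add_neg_cancel, hν.map_zero, hν.eq_of_norm_eq (-x) x (by simp)] at h
  linarith

theorem sum_le {κ : Type*} (s : Finset κ) (f : κ → ι → 𝕜) :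
    ν (∑ j ∈ s, f j) ≤ ∑ j ∈ s, ν (f j) :=
  Finset.le_sum_of_subadditive ν hν.map_zero.le hν.add_le s f

theorem update_le [DecidableEq ι] (z : ι → 𝕜) (a : ι) {c : 𝕜} (hc : ‖c‖ ≤ ‖z a‖) :
    ν (Function.update z a c) ≤ ν z := by
  set s := ‖c‖ / ‖z a‖
  have hs₀ : 0 ≤ s := by positivity
  have hs₁ : s ≤ 1 := div_le_one_of_le₀ hc (norm_nonneg _)
  have hsz : s * ‖z a‖ = ‖c‖ :=
    div_mul_cancel_of_imp fun h => le_antisymm (h ▸ hc) (norm_nonneg c)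
  set w := Function.update z a (-z a)
  have hw : ν w = ν z := hν.eq_of_norm_eq _ _ fun i => by
    rcases eq_or_ne i a with rfl | h <;> simp [w, *]
  have hcomb : (((1 + s) / 2 : ℝ) : 𝕜) • z + (((1 - s) / 2 : ℝ) : 𝕜) • w
      = Function.update z a ((s : 𝕜) * z a) := by
    ext i
    rcases eq_or_ne i a with rfl | h
    · simp only [w, Pi.add_apply, Pi.smul_apply, smul_eq_mul, Function.update_self]
      push_cast; ring
    · simp only [w, Pi.add_apply, Pi.smul_apply, smul_eq_mul, Function.update_of_ne h]
      push_cast; ring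
  have hcz : ν (Function.update z a c) = ν (Function.update z a ((s : 𝕜) * z a)) :=
    hν.eq_of_norm_eq _ _ fun i => by
      rcases eq_or_ne i a with rfl | h
      · simp [abs_of_nonneg hs₀, hsz]
      · simp [h]
  calc ν (Function.update z a c)
      ≤ ‖(((1 + s) / 2 : ℝ) : 𝕜)‖ * ν z + ‖(((1 - s) / 2 : ℝ) : 𝕜)‖ * ν w := by
        rw [hcz, ← hcomb, ← hν.smul, ← hν.smul]; exact hν.add_le _ _
    _ = ν z := by
        rw [hw, RCLike.norm_ofReal, RCLike.norm_ofReal, abs_of_nonneg (by linarith),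
          abs_of_nonneg (by linarith)]
        ring

theorem mono [Fintype ι] {x y : ι → 𝕜} (h : ∀ i, ‖x i‖ ≤ ‖y i‖) : ν x ≤ ν y := by
  classical
  suffices ∀ s : Finset ι, ν (s.piecewise x y) ≤ ν y by simpa using this Finset.univ
  intro s
  induction s using Finset.induction_on with
  | empty => simp
  | insert a s ha ih =>
    rw [Finset.piecewise_insert]
    refine (hν.update_le _ a ?_).trans ih
    rw [Finset.piecewise_eq_of_notMem _ _ _ ha]
    exact h a

theorem norm_apply_mul_le [Fintype ι] [DecidableEq ι] (x : ι → 𝕜) (j : ι) :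
    ‖x j‖ * ν (Pi.single j 1) ≤ ν x := by
  rw [← hν.smul]
  exact hν.mono fun i => by by_cases h : i = j <;> simp [h]

theorem bddAbove_mulVec [Fintype ι] (M : Matrix ι ι 𝕜) :
    BddAbove {r : ℝ | ∃ x, ν x = 1 ∧ r = ν (M *ᵥ x)} := by
  classical
  refine ⟨∑ j, ν (Mᵀ j) / ν (Pi.single j 1), ?_⟩
  rintro _ ⟨x, hx, rfl⟩
  have hMx : M *ᵥ x = ∑ j, x j • Mᵀ j := by
    ext i
    simp [mulVec, dotProduct, mul_comm]
  rw [hMx]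
  refine (hν.sum_le _ _).trans (Finset.sum_le_sum fun j _ => ?_)
  have hej : 0 < ν (Pi.single j 1) := hν.pos _ (by simp)
  rw [hν.smul, div_eq_inv_mul]
  refine mul_le_mul_of_nonneg_right ?_ (hν.nonneg _)
  rw [← one_div, le_div_iff₀ hej, ← hx]
  exact hν.norm_apply_mul_le x j

theorem apply_mulVec_le [Fintype ι] (M : Matrix ι ι 𝕜) (x : ι → 𝕜) :
    ν (M *ᵥ x) ≤ inducedMatrixNorm ν M * ν x := by
  rcases eq_or_ne x 0 with rfl | hx
  · simp [hν.map_zero]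
  have hνx := hν.pos x hx
  have hunit : ν ((ν x : 𝕜)⁻¹ • x) = 1 := by
    rw [hν.smul, norm_inv, RCLike.norm_ofReal, abs_of_pos hνx, inv_mul_cancel₀ hνx.ne']
  have := le_csSup (hν.bddAbove_mulVec M) ⟨_, hunit, rfl⟩
  rwa [mulVec_smul, hν.smul, norm_inv, RCLike.norm_ofReal, abs_of_pos hνx,
    inv_mul_le_iff₀ hνx, mul_comm] at this

theorem exists_norm_sub_le_inducedMatrixNorm [Fintype ι] [DecidableEq ι] {d : ι → 𝕜}
    {E : Matrix ι ι 𝕜} {μ : 𝕜} {v : ι → 𝕜} (hv : v ≠ 0)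
    (heig : (diagonal d + E) *ᵥ v = μ • v) :
    ∃ i, ‖μ - d i‖ ≤ inducedMatrixNorm ν E := by
  have hEv : E *ᵥ v = fun i => (μ - d i) * v i := by
    ext i
    have := congrFun heig i
    simp only [add_mulVec, Pi.add_apply, mulVec_diagonal, Pi.smul_apply, smul_eq_mul] at this
    linear_combination this
  obtain ⟨j, -⟩ := Function.ne_iff.mp hv
  have : Nonempty ι := ⟨j⟩
  obtain ⟨i₀, hi₀⟩ := Finite.exists_min fun i => ‖μ - d i‖
  have hνv := hν.pos v hv
  refine ⟨i₀, le_of_mul_le_mul_right ?_ hνv⟩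
  calc ‖μ - d i₀‖ * ν v = ν ((μ - d i₀) • v) := (hν.smul _ _).symm
    _ ≤ ν (E *ᵥ v) := hν.mono fun i => by
        rw [hEv, Pi.smul_apply, smul_eq_mul, norm_mul, norm_mul]
        exact mul_le_mul_of_nonneg_right (hi₀ i) (norm_nonneg _)
    _ ≤ inducedMatrixNorm ν E * ν v := hν.apply_mulVec_le E v

end IsAbsoluteNorm

theorem stmt_9_general (n : ℕ) (d : Fin n → ℂ) (E : Matrix (Fin n) (Fin n) ℂ)
    -- ν is an absolute norm on ℂⁿ:
    (ν : (Fin n → ℂ) → ℝ)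
    (hν_pos : ∀ x, x ≠ 0 → 0 < ν x)
    (hν_add : ∀ x y, ν (x + y) ≤ ν x + ν y)
    (hν_smul : ∀ (c : ℂ) x, ν (c • x) = ‖c‖ * ν x)
    (hν_abs : ∀ x y, (∀ i, ‖x i‖ = ‖y i‖) → ν x = ν y)
    -- N is the matrix norm induced by ν:
    (N : Matrix (Fin n) (Fin n) ℂ → ℝ)
    (hN : ∀ M, N M = sSup {r : ℝ | ∃ x, ν x = 1 ∧ r = ν (M.mulVec x)})
    (lamHat : ℂ) (v : Fin n → ℂ) (hv : v ≠ 0)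
    (heig : (Matrix.diagonal d + E).mulVec v = lamHat • v) :
    ∃ i, ‖lamHat - d i‖ ≤ N E := by
  rw [hN]
  exact IsAbsoluteNorm.exists_norm_sub_le_inducedMatrixNorm
    ⟨hν_pos, hν_add, hν_smul, hν_abs⟩ hv heig

/-- Bauer–Fike for a diagonal matrix: Let `A = diag(d)` be a diagonal
matrix, `E` any matrix, and `‖·‖` (here `N`) the matrix norm induced by an absolute norm
`ν` on `ℂⁿ`.  If `λ̂` is an eigenvalue of `A + E`, then some diagonal entry `dᵢ`
satisfies `|λ̂ - dᵢ| ≤ N E`. -/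
theorem stmt_9 (n : ℕ) (d : Fin n → ℂ) (E : Matrix (Fin n) (Fin n) ℂ)
    -- ν is an absolute norm on ℂⁿ:
    (ν : (Fin n → ℂ) → ℝ)
    (hν_pos : ∀ x, x ≠ 0 → 0 < ν x) (hν_zero : ν 0 = 0)
    (hν_add : ∀ x y, ν (x + y) ≤ ν x + ν y)
    (hν_smul : ∀ (c : ℂ) x, ν (c • x) = ‖c‖ * ν x)
    (hν_abs : ∀ x y, (∀ i, ‖x i‖ = ‖y i‖) → ν x = ν y)
    -- N is the matrix norm induced by ν:
    (N : Matrix (Fin n) (Fin n) ℂ → ℝ)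
    (hN : ∀ M, N M = sSup {r : ℝ | ∃ x, ν x = 1 ∧ r = ν (M.mulVec x)})
    (lamHat : ℂ) (v : Fin n → ℂ) (hv : v ≠ 0)
    (heig : (Matrix.diagonal d + E).mulVec v = lamHat • v) :
    ∃ i, ‖lamHat - d i‖ ≤ N E :=
  stmt_9_general n d E ν hν_pos hν_add hν_smul hν_abs N hN lamHat v hv heig
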